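/- Let (w_j, a_j, b_j, c_j, φ_j) be a finite family of real numbers with w_j > 0, 0 ≤ φ_j < 2π, a_j, b_j, c_j ≥ 0, a_j² + b_j² + c_j² = 1 for all j, and Σ_j w_j = 6, Σ_j w_j a_j² = Σ_j w_j c_j². Then Σ_j w_j · η(a_j, b_j, c_j, φ_j) ≤ 60 + (15/2)·sqrt 22, where η(a,b,c,φ) := 15a² + 10b² + 5c² + sqrt(8b²|3a + 2c·e^{iφ}|² + (9a² + 2b² - c²)²). Equality holds if and only if (a_j, b_j, c_j, φ_j) = (3√2/8, √7/4, 3√2/8, 0) for all j. -/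

import Mathlib

/-- `η(a,b,c,φ) = 15a²+10b²+5c² + sqrt(8b²|3a+2c e^{iφ}|² + (9a²+2b²-c²)²)`. -/
noncomputable def η (a b c φ : ℝ) : ℝ :=
  15*a^2 + 10*b^2 + 5*c^2 +
    Real.sqrt (8*b^2*((3*a + 2*c*Real.cos φ)^2 + (2*c*Real.sin φ)^2)
      + (9*a^2 + 2*b^2 - c^2)^2)

/-!
On the sphere `a² + b² + c² = 1` the function `η` lies below the affine function
`K + M (a² - c²)` of `(a², c²)`, with `K = 10 + 5√22/4` and `M = 5 + 8√22/11`, touching it only at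
`(3√2/8, √7/4, 3√2/8)` with `cos φ = 1`. Summed against the weights, the `M`-term cancels because
`∑ w a² = ∑ w c²`, and `∑ w = 6` leaves `6K = 60 + 15√22/2`.

After eliminating `b²` and writing `t = cos φ`, the pointwise bound says that the radicand of `η`
is at most `(55 + 32(a² - c²))² / 88`, and `44·88` times the gap is an explicit sum of three
nonnegative terms (`radicand_sos`).
-/

open Real

/-- The radicand of `η` after substituting `b² = 1 - a² - c²` and `cos φ = t`. -/
def radicand (a c t : ℝ) : ℝ :=
  8 * (1 - a^2 - c^2) * (9*a^2 + 4*c^2 + 12*a*c*t) + (2 + 7*a^2 - 3*c^2)^2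

noncomputable def etaMajorant (a c : ℝ) : ℝ :=
  10 + 5/4 * √22 + (5 + 8/11 * √22) * (a^2 - c^2)

lemma radicand_sos (a c t : ℝ) :
    44 * ((55 + 32*(a^2 - c^2))^2 - 88 * radicand a c t) =
      3 * (704*(a*c) - 198 + 215*(a - c)^2)^2 + 3 * ((a - c)^2 * (7700 - 1521*(a - c)^2))
        + 371712 * ((1 - a^2 - c^2) * (a*c) * (1 - t)) := by
  unfold radicand; ring

section radicand

variable {a c t : ℝ}

lemma radicand_sos_terms_nonneg (ha : 0 ≤ a) (hc : 0 ≤ c) (hac : a^2 + c^2 ≤ 1) (ht : t ≤ 1) :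
    0 ≤ 3 * (704*(a*c) - 198 + 215*(a - c)^2)^2 ∧
    0 ≤ 3 * ((a - c)^2 * (7700 - 1521*(a - c)^2)) ∧
    0 ≤ 371712 * ((1 - a^2 - c^2) * (a*c) * (1 - t)) := by
  have hac0 : 0 ≤ a * c := mul_nonneg ha hc
  refine ⟨by positivity, ?_, ?_⟩
  · have : (a - c)^2 ≤ 1 := by nlinarith
    have : 0 ≤ 7700 - 1521*(a - c)^2 := by linarith
    positivity
  · have : 0 ≤ 1 - a^2 - c^2 := by linarith
    have : 0 ≤ 1 - t := by linarith
    positivity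

lemma radicand_le (ha : 0 ≤ a) (hc : 0 ≤ c) (hac : a^2 + c^2 ≤ 1) (ht : t ≤ 1) :
    88 * radicand a c t ≤ (55 + 32*(a^2 - c^2))^2 := by
  obtain ⟨h₁, h₂, h₃⟩ := radicand_sos_terms_nonneg ha hc hac ht
  linarith [radicand_sos a c t]

lemma radicand_eq_iff (ha : 0 ≤ a) (hc : 0 ≤ c) (hac : a^2 + c^2 ≤ 1) (ht : t ≤ 1) :
    88 * radicand a c t = (55 + 32*(a^2 - c^2))^2 ↔ a = c ∧ a^2 = 9/32 ∧ t = 1 := by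
  obtain ⟨h₁, h₂, h₃⟩ := radicand_sos_terms_nonneg ha hc hac ht
  have hsos := radicand_sos a c t
  constructor
  · intro heq
    have hdiag : (a - c)^2 * (7700 - 1521*(a - c)^2) = 0 := by nlinarith
    have hdist : (a - c)^2 ≤ 1 := by nlinarith [mul_nonneg ha hc]
    have hac_eq : a = c := by
      rcases mul_eq_zero.mp hdiag with h | h
      · exact sub_eq_zero.mp (pow_eq_zero_iff two_ne_zero |>.mp h)
      · linarith
    subst hac_eq
    have ha2 : a^2 = 9/32 := by nlinarith
    have ht1 : (1 - a^2 - a^2) * (a*a) * (1 - t) = 0 := by linarith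
    rw [← sq, ha2] at ht1
    exact ⟨rfl, ha2, by linarith⟩
  · rintro ⟨rfl, ha2, rfl⟩
    have : 704*(a*a) - 198 + 215*(a - a)^2 = 0 := by rw [← sq, ha2]; ring
    linear_combination (-1/44) * hsos - (3/44 * (704*(a*a) - 198 + 215*(a - a)^2)) * this

end radicand

lemma eq_three_mul_sqrt_two_div_eight_iff {a : ℝ} (ha : 0 ≤ a) : a = 3 * √2 / 8 ↔ a^2 = 9/32 := by
  rw [← pow_left_inj₀ ha (by positivity) two_ne_zero, div_pow, mul_pow, sq_sqrt zero_le_two]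
  norm_num

lemma eq_sqrt_seven_div_four_iff {b : ℝ} (hb : 0 ≤ b) : b = √7 / 4 ↔ b^2 = 7/16 := by
  rw [← pow_left_inj₀ hb (by positivity) two_ne_zero, div_pow, sq_sqrt (by norm_num)]
  norm_num

section sphere

variable {a b c : ℝ} (φ : ℝ)

lemma radicand_cos_eq (hn : a^2 + b^2 + c^2 = 1) :
    8*b^2*((3*a + 2*c*cos φ)^2 + (2*c*sin φ)^2) + (9*a^2 + 2*b^2 - c^2)^2 =
      radicand a c (cos φ) := by
  have hb2 : b^2 = 1 - a^2 - c^2 := by linarith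
  rw [radicand, hb2]
  linear_combination (32 * (1 - a^2 - c^2) * c^2) * sin_sq_add_cos_sq φ

lemma etaMajorant_sub_η (hn : a^2 + b^2 + c^2 = 1) :
    etaMajorant a c - η a b c φ = √22 / 44 * (55 + 32*(a^2 - c^2)) - √(radicand a c (cos φ)) := by
  rw [η, radicand_cos_eq φ hn, etaMajorant]
  linear_combination (-10) * hn

lemma sqrt_twentytwo_div_mul_sq (r : ℝ) : (√22 / 44 * r)^2 = r^2 / 88 := by
  rw [mul_pow, div_pow, sq_sqrt (by norm_num)]; ring

lemma η_le_etaMajorant (hn : a^2 + b^2 + c^2 = 1) (ha : 0 ≤ a) (hc : 0 ≤ c) :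
    η a b c φ ≤ etaMajorant a c := by
  have hac : a^2 + c^2 ≤ 1 := by linarith [sq_nonneg b]
  have hr : 0 ≤ 55 + 32*(a^2 - c^2) := by nlinarith [sq_nonneg a]
  rw [← sub_nonneg, etaMajorant_sub_η φ hn, sub_nonneg, sqrt_le_left (by positivity),
    sqrt_twentytwo_div_mul_sq]
  linarith [radicand_le ha hc hac (cos_le_one φ)]

lemma η_eq_etaMajorant_iff (hn : a^2 + b^2 + c^2 = 1) (ha : 0 ≤ a) (hb : 0 ≤ b) (hc : 0 ≤ c) :
    η a b c φ = etaMajorant a c ↔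
      a = 3 * √2 / 8 ∧ b = √7 / 4 ∧ c = 3 * √2 / 8 ∧ cos φ = 1 := by
  have hac : a^2 + c^2 ≤ 1 := by linarith [sq_nonneg b]
  have hr : 0 ≤ 55 + 32*(a^2 - c^2) := by nlinarith [sq_nonneg a]
  have hρ : 0 ≤ radicand a c (cos φ) := by rw [← radicand_cos_eq φ hn]; positivity
  rw [eq_comm, ← sub_eq_zero, etaMajorant_sub_η φ hn, sub_eq_zero, eq_comm,
    sqrt_eq_iff_eq_sq hρ (by positivity), sqrt_twentytwo_div_mul_sq, eq_div_iff (by norm_num),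
    mul_comm, radicand_eq_iff ha hc hac (cos_le_one φ), eq_three_mul_sqrt_two_div_eight_iff ha,
    eq_sqrt_seven_div_four_iff hb, eq_three_mul_sqrt_two_div_eight_iff hc]
  constructor
  · rintro ⟨rfl, ha2, hcos⟩
    exact ⟨ha2, by linarith, ha2, hcos⟩
  · rintro ⟨ha2, -, hc2, hcos⟩
    refine ⟨?_, ha2, hcos⟩
    rwa [← pow_left_inj₀ ha hc two_ne_zero, hc2]

end sphere

lemma sum_mul_etaMajorant {ι : Type*} (s : Finset ι) (w a c : ι → ℝ) (hsum : ∑ j ∈ s, w j = 6)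
    (hac : ∑ j ∈ s, w j * a j ^ 2 = ∑ j ∈ s, w j * c j ^ 2) :
    ∑ j ∈ s, w j * etaMajorant (a j) (c j) = 60 + 15/2 * √22 := by
  have hsplit : ∑ j ∈ s, w j * etaMajorant (a j) (c j) =
      (10 + 5/4 * √22) * ∑ j ∈ s, w j
        + (5 + 8/11 * √22) * (∑ j ∈ s, w j * a j ^ 2 - ∑ j ∈ s, w j * c j ^ 2) := by
    simp only [etaMajorant, Finset.mul_sum, ← Finset.sum_sub_distrib, ← Finset.sum_add_distrib]
    exact Finset.sum_congr rfl fun j _ => by ring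
  rw [hsplit, hsum, hac, sub_self]
  ring

theorem stmt2 {ι : Type*} [Fintype ι] (w a b c φ : ι → ℝ)
    (hw : ∀ j, 0 < w j)
    (hφ0 : ∀ j, 0 ≤ φ j) (hφ2 : ∀ j, φ j < 2*Real.pi)
    (ha : ∀ j, 0 ≤ a j) (hb : ∀ j, 0 ≤ b j) (hc : ∀ j, 0 ≤ c j)
    (hnorm : ∀ j, (a j)^2 + (b j)^2 + (c j)^2 = 1)
    (hsum : ∑ j, w j = 6)
    (hac : ∑ j, w j * (a j)^2 = ∑ j, w j * (c j)^2) :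
    ∑ j, w j * η (a j) (b j) (c j) (φ j) ≤ 60 + (15/2)*Real.sqrt 22 ∧
    (∑ j, w j * η (a j) (b j) (c j) (φ j) = 60 + (15/2)*Real.sqrt 22 ↔
      ∀ j, a j = 3*Real.sqrt 2/8 ∧ b j = Real.sqrt 7/4 ∧
        c j = 3*Real.sqrt 2/8 ∧ φ j = 0) := by
  have hle : ∀ j ∈ Finset.univ, w j * η (a j) (b j) (c j) (φ j) ≤ w j * etaMajorant (a j) (c j) :=
    fun j _ => mul_le_mul_of_nonneg_left (η_le_etaMajorant (φ j) (hnorm j) (ha j) (hc j)) (hw j).le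
  have htotal := sum_mul_etaMajorant Finset.univ w a c hsum hac
  refine ⟨htotal ▸ Finset.sum_le_sum hle, ?_⟩
  rw [← htotal, Finset.sum_eq_sum_iff_of_le hle]
  refine forall_congr' fun j => ?_
  have hφ : -(2 * π) < φ j := by linarith [hφ0 j, pi_pos]
  rw [mul_right_inj' (hw j).ne', η_eq_etaMajorant_iff (φ j) (hnorm j) (ha j) (hb j) (hc j),
    cos_eq_one_iff_of_lt_of_lt hφ (hφ2 j)]
  simp only [Finset.mem_univ, true_implies]
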